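/- There exist a natural number n₀ and real numbers δ₀ > 0 and k < 1 such that for every integer m > n₀ and every real ε with 0 < ε ≤ δ₀: (i) r_{m,ε} := 1 − 4ε/m > (ε/m)^{1/(m−1)}, and (ii) the map ι_{m,ε}(z) := z^m + ε·z·η_{r_{m,ε}}(z) is continuously real-differentiable on the open unit disk 𝔻 = {z ∈ ℂ : |z| < 1} and satisfies |∂̄ι_{m,ε}(z)| ≤ k·|∂ι_{m,ε}(z)| for every z ∈ 𝔻. -/

import Mathlib

/-- The bump function `b(x) = exp(1 + 1/(x²−1))` for `x < 1`, and `b(x) = 0` for `x ≥ 1`. -/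
noncomputable def bumpB (x : ℝ) : ℝ :=
  if x < 1 then Real.exp (1 + 1 / (x ^ 2 - 1)) else 0

/-- `η̂_r(x) = 1` for `x ≤ r`, `= b((x−r)/(1−r))` for `r ≤ x ≤ 1`, and `= 0` for `x ≥ 1`. -/
noncomputable def etaHat (r : ℝ) (x : ℝ) : ℝ :=
  if x ≤ r then 1 else bumpB ((x - r) / (1 - r))

/-- `η_r(z) := η̂_r(|z|)`. -/
noncomputable def eta (r : ℝ) (z : ℂ) : ℝ :=
  etaHat r ‖z‖

/-- The interpolation `ι_{m,ε}(z) := z^m + ε·z·η_{r}(z)` with `r = r_{m,ε} := 1 − 4ε/m`. -/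
noncomputable def iota (m : ℕ) (ε : ℝ) (z : ℂ) : ℂ :=
  z ^ m + (ε : ℂ) * z * ((eta (1 - 4 * ε / (m : ℝ)) z : ℝ) : ℂ)

/-- The Wirtinger derivative `∂f(z) = ½(∂f/∂x − i·∂f/∂y)`, where the partials are
computed from the real Fréchet derivative. -/
noncomputable def wirtingerD (f : ℂ → ℂ) (z : ℂ) : ℂ :=
  (1 / 2) * (fderiv ℝ f z 1 - Complex.I * fderiv ℝ f z Complex.I)

/-- The conjugate Wirtinger derivative `∂̄f(z) = ½(∂f/∂x + i·∂f/∂y)`. -/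
noncomputable def wirtingerDBar (f : ℂ → ℂ) (z : ℂ) : ℂ :=
  (1 / 2) * (fderiv ℝ f z 1 + Complex.I * fderiv ℝ f z Complex.I)

open Real Filter Topology

noncomputable def mulMax (y : ℝ) : ℝ := y * max y 0

lemma hasDerivAt_mulMax (y : ℝ) : HasDerivAt mulMax (2 * max y 0) y := by
  rcases lt_trichotomy y 0 with h | h | h
  · have h0 : HasDerivAt (fun _ : ℝ => (0:ℝ)) 0 y := hasDerivAt_const y 0
    have : max y 0 = 0 := max_eq_right h.le
    rw [this, mul_zero]
    refine h0.congr_of_eventuallyEq ?_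
    filter_upwards [Iio_mem_nhds h] with t ht
    have ht' : t < 0 := ht
    simp [mulMax, max_eq_right ht'.le]
  · subst h
    simp only [max_self, mul_zero]
    rw [hasDerivAt_iff_isLittleO]
    rw [Asymptotics.isLittleO_iff]
    intro c hc
    have : ∀ᶠ t : ℝ in 𝓝 0, |t| ≤ c := by
      have := Metric.ball_mem_nhds (0:ℝ) hc
      filter_upwards [this] with t ht
      have : dist t 0 < c := ht
      rw [Real.dist_eq, sub_zero] at this
      exact this.le
    filter_upwards [this] with t ht
    simp only [mulMax, zero_add, sub_zero, smul_zero, sub_zero, max_self, mul_zero]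
    rw [Real.norm_eq_abs, Real.norm_eq_abs, abs_mul]
    have h1 : |max t 0| ≤ |t| := by
      rcases le_or_gt t 0 with h' | h'
      · simp [max_eq_right h']
      · simp [max_eq_left h'.le]
    calc |t| * |max t 0| ≤ |t| * |t| := by
          exact mul_le_mul_of_nonneg_left h1 (abs_nonneg t)
      _ = |t| * |t| := rfl
      _ ≤ c * |t| := by nlinarith [abs_nonneg t]
  · have h0 : HasDerivAt (fun t : ℝ => t * t) (2 * y) y := by
      simpa [two_mul] using (hasDerivAt_id y).fun_mul (hasDerivAt_id y)
    have : max y 0 = y := max_eq_left h.le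
    rw [this]
    refine h0.congr_of_eventuallyEq ?_
    filter_upwards [Ioi_mem_nhds h] with t ht
    have ht' : 0 < t := ht
    simp [mulMax, max_eq_left ht'.le]

lemma contDiff_mulMax : ContDiff ℝ 1 mulMax := by
  rw [contDiff_one_iff_deriv]
  constructor
  · exact fun y => (hasDerivAt_mulMax y).differentiableAt
  · have : deriv mulMax = fun y => 2 * max y 0 := funext fun y => (hasDerivAt_mulMax y).deriv
    rw [this]
    exact continuous_const.mul (continuous_id.max continuous_const)

lemma mulMax_nonneg (y : ℝ) : 0 ≤ mulMax y := by
  rcases le_or_gt y 0 with h | h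
  · simp [mulMax, max_eq_right h]
  · simp only [mulMax, max_eq_left h.le]; positivity

lemma mulMax_lt_one {y : ℝ} (hy : y < 1) : mulMax y < 1 := by
  rcases le_or_gt y 0 with h | h
  · simp [mulMax, max_eq_right h]
  · simp only [mulMax, max_eq_left h.le]; nlinarith

lemma expNegInvGlue_of_pos {u : ℝ} (hu : 0 < u) : expNegInvGlue u = Real.exp (-u⁻¹) := by
  simp [expNegInvGlue, not_le.2 hu]

lemma hasDerivAt_expNegInvGlue {t : ℝ} (ht : 0 < t) :
    HasDerivAt expNegInvGlue (Real.exp (-t⁻¹) * (t ^ 2)⁻¹) t := by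
  have h : HasDerivAt (fun u : ℝ => Real.exp (-u⁻¹)) (Real.exp (-t⁻¹) * (t ^ 2)⁻¹) t := by
    have h1 : HasDerivAt (fun u : ℝ => -u⁻¹) ((t ^ 2)⁻¹) t := by
      simpa using (hasDerivAt_inv ht.ne').fun_neg
    simpa using h1.exp
  refine h.congr_of_eventuallyEq ?_
  filter_upwards [Ioi_mem_nhds ht] with u hu
  exact expNegInvGlue_of_pos hu

lemma keyexp {u : ℝ} (hu : 0 < u) :
    Real.exp (-u⁻¹) * (u ^ 2)⁻¹ ≤ 4 * Real.exp (-2) := by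
  set v := u⁻¹ with hv
  have hv0 : 0 < v := inv_pos.2 hu
  have hvu : (u ^ 2)⁻¹ = v ^ 2 := by
    rw [hv]; field_simp
  rw [hvu]
  set t := v / 2 with htdef
  have ht0 : 0 < t := by positivity
  have h1 : t ≤ Real.exp (t - 1) := by
    have := Real.add_one_le_exp (t - 1)
    linarith
  have h2 : t * Real.exp (-t) ≤ Real.exp (-1) := by
    have := mul_le_mul_of_nonneg_right h1 (Real.exp_pos (-t)).le
    calc t * Real.exp (-t) ≤ Real.exp (t - 1) * Real.exp (-t) := this
      _ = Real.exp (-1) := by rw [← Real.exp_add]; ring_nf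
  have h3 : (t * Real.exp (-t)) ^ 2 ≤ Real.exp (-1) ^ 2 := by
    have hnn : 0 ≤ t * Real.exp (-t) := by positivity
    exact pow_le_pow_left₀ hnn h2 2
  have h4 : Real.exp (-1) ^ 2 = Real.exp (-2) := by
    rw [sq, ← Real.exp_add]; norm_num
  have h5 : Real.exp (-t) ^ 2 = Real.exp (-v) := by
    rw [sq, ← Real.exp_add]; rw [htdef]; ring_nf
  have h6 : t ^ 2 = v ^ 2 / 4 := by rw [htdef]; ring
  have h7 : (t * Real.exp (-t)) ^ 2 = v ^ 2 / 4 * Real.exp (-v) := by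
    rw [mul_pow, h6, h5]
  rw [h7, h4] at h3
  nlinarith [Real.exp_pos (-v)]


lemma bumpB_eq {s : ℝ} (hs0 : 0 < s) :
    bumpB s = Real.exp 1 * expNegInvGlue (1 - s * s) := by
  rw [bumpB]
  by_cases hs1 : s < 1
  · rw [if_pos hs1]
    have hu : 0 < 1 - s * s := by nlinarith
    rw [expNegInvGlue_of_pos hu, ← Real.exp_add]
    congr 1
    have hne : s ^ 2 - 1 ≠ 0 := by nlinarith
    have h2 : 1 / (s ^ 2 - 1) = -(1 - s * s)⁻¹ := by
      rw [one_div, show (1 - s * s)⁻¹ = (-(s ^ 2 - 1))⁻¹ by ring_nf, ← neg_inv, neg_neg]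
    rw [h2]
  · push_neg at hs1
    rw [if_neg (not_lt.2 hs1)]
    rw [expNegInvGlue.zero_of_nonpos (by nlinarith : 1 - s * s ≤ 0), mul_zero]

lemma etaHat_eq {r : ℝ} (hr : r < 1) (x : ℝ) :
    etaHat r x = Real.exp 1 * expNegInvGlue (1 - mulMax ((x - r) / (1 - r))) := by
  have h1r : 0 < 1 - r := by linarith
  set s := (x - r) / (1 - r) with hs
  by_cases hx : x ≤ r
  · have hs0 : s ≤ 0 := by
      rw [hs, div_nonpos_iff]
      right
      constructor <;> linarith
    rw [etaHat, if_pos hx]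
    rw [show mulMax s = 0 by simp [mulMax, max_eq_right hs0]]
    rw [sub_zero, expNegInvGlue_of_pos one_pos, ← Real.exp_add]
    norm_num
  · push_neg at hx
    have hs0 : 0 < s := div_pos (by linarith) h1r
    have hmm : mulMax s = s * s := by simp [mulMax, max_eq_left hs0.le]
    rw [etaHat, if_neg (not_le.2 hx), bumpB_eq hs0, hmm]

noncomputable def dabs (z : ℂ) : ℂ →L[ℝ] ℝ :=
  ((‖z‖)⁻¹ * z.re) • Complex.reCLM + ((‖z‖)⁻¹ * z.im) • Complex.imCLM

lemma dabs_apply (z v : ℂ) :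
    dabs z v = (‖z‖)⁻¹ * z.re * v.re + (‖z‖)⁻¹ * z.im * v.im := by
  simp [dabs]

lemma hasFDerivAt_cabs {z : ℂ} (hz : z ≠ 0) : HasFDerivAt (fun w : ℂ => ‖w‖) (dabs z) z := by
  have hns : Complex.normSq z ≠ 0 := by
    simpa [Complex.normSq_eq_zero] using hz
  have h1 : HasFDerivAt Complex.normSq
      ((2 * z.re) • Complex.reCLM + (2 * z.im) • Complex.imCLM : ℂ →L[ℝ] ℝ) z := by
    have hre : HasFDerivAt (fun w : ℂ => w.re) (Complex.reCLM : ℂ →L[ℝ] ℝ) z :=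
      Complex.reCLM.hasFDerivAt
    have him : HasFDerivAt (fun w : ℂ => w.im) (Complex.imCLM : ℂ →L[ℝ] ℝ) z :=
      Complex.imCLM.hasFDerivAt
    have := (hre.fun_mul hre).fun_add (him.fun_mul him)
    have heq : Complex.normSq = fun w : ℂ => w.re * w.re + w.im * w.im := by
      funext w; exact Complex.normSq_apply w
    rw [heq]
    refine this.congr_fderiv (Eq.symm ?_)
    ext v <;> simp <;> ring
  have h2 : HasDerivAt Real.sqrt (1 / (2 * Real.sqrt (Complex.normSq z))) (Complex.normSq z) :=
    Real.hasDerivAt_sqrt hns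
  have h3 := h2.comp_hasFDerivAt z h1
  have heq2 : (Real.sqrt ∘ Complex.normSq) = (fun w : ℂ => ‖w‖) := by
    funext w; exact (Complex.norm_def w).symm
  rw [heq2] at h3
  refine h3.congr_fderiv (Eq.symm ?_)
  have habs : Real.sqrt (Complex.normSq z) = ‖z‖ := (Complex.norm_def z).symm
  have habs0 : ‖z‖ ≠ 0 := by simpa using hz
  refine ContinuousLinearMap.ext fun v => ?_
  simp only [dabs, ContinuousLinearMap.add_apply, ContinuousLinearMap.coe_smul',
    Pi.smul_apply, Complex.reCLM_apply, Complex.imCLM_apply, smul_eq_mul,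
    ContinuousLinearMap.smul_apply, habs, one_div]
  field_simp


noncomputable def etaDeriv (r : ℝ) (z : ℂ) : ℝ :=
  -(Real.exp 1 * (Real.exp (-(1 - mulMax ((‖z‖ - r) / (1 - r)))⁻¹) *
      ((1 - mulMax ((‖z‖ - r) / (1 - r))) ^ 2)⁻¹) *
    (2 * max ((‖z‖ - r) / (1 - r)) 0 * (1 - r)⁻¹))

lemma hasFDerivAt_eta {r : ℝ} (hr1 : r < 1) {z : ℂ} (hz : z ≠ 0)
    (hz1 : ‖z‖ < 1) :
    HasFDerivAt (eta r) (etaDeriv r z • dabs z) z := by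
  have h1r : 0 < 1 - r := by linarith
  set x₀ := ‖z‖ with hx₀
  set s := (x₀ - r) / (1 - r) with hsdef
  set u := 1 - mulMax s with hudef
  have hs1 : s < 1 := by
    rw [hsdef, div_lt_one h1r]
    linarith
  have hu : 0 < u := by
    have := mulMax_lt_one hs1
    rw [hudef]
    linarith
  have haff : HasDerivAt (fun y : ℝ => (y - r) / (1 - r)) ((1 - r)⁻¹) x₀ := by
    simpa [one_div] using ((hasDerivAt_id x₀).sub_const r).div_const (1 - r)
  have hq : HasDerivAt (fun y : ℝ => mulMax ((y - r) / (1 - r)))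
      (2 * max s 0 * (1 - r)⁻¹) x₀ := by
    have := (hasDerivAt_mulMax s).comp x₀ haff
    simpa [Function.comp_def, mul_assoc] using this
  have hqz : HasFDerivAt (fun w : ℂ => mulMax ((‖w‖ - r) / (1 - r)))
      ((2 * max s 0 * (1 - r)⁻¹) • dabs z) z :=
    by have := hq.comp_hasFDerivAt z (hasFDerivAt_cabs hz); exact this
  have hinner : HasFDerivAt (fun w : ℂ => 1 - mulMax ((‖w‖ - r) / (1 - r)))
      (-((2 * max s 0 * (1 - r)⁻¹) • dabs z)) z := hqz.const_sub 1
  have hG := (hasDerivAt_expNegInvGlue hu).comp_hasFDerivAt z hinner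
  have hfin := hG.const_mul (Real.exp 1)
  have heq : eta r = fun w : ℂ =>
      Real.exp 1 * expNegInvGlue (1 - mulMax ((‖w‖ - r) / (1 - r))) := by
    funext w
    exact etaHat_eq hr1 _
  rw [heq]
  refine hfin.congr_fderiv (Eq.symm ?_)
  refine ContinuousLinearMap.ext fun v => ?_
  simp only [etaDeriv, ← hx₀, ← hsdef, ← hudef, ContinuousLinearMap.smul_apply,
    ContinuousLinearMap.neg_apply, smul_eq_mul, Function.comp]
  ring

lemma exp_neg_one_le : Real.exp (-1) ≤ 3 / 8 := by
  have h := Real.exp_one_gt_d9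
  have h1 : (8 : ℝ) / 3 ≤ Real.exp 1 := by linarith
  rw [Real.exp_neg]
  rw [inv_le_comm₀ (Real.exp_pos 1) (by norm_num)]
  linarith

lemma etaDeriv_abs_le {r : ℝ} (hr1 : r < 1) {z : ℂ} (hz1 : ‖z‖ < 1) :
    |etaDeriv r z| ≤ 3 * (1 - r)⁻¹ := by
  have h1r : 0 < 1 - r := by linarith
  set s := (‖z‖ - r) / (1 - r) with hsdef
  set u := 1 - mulMax s with hudef
  have hs1 : s < 1 := by
    rw [hsdef, div_lt_one h1r]
    linarith
  have hu : 0 < u := by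
    have := mulMax_lt_one hs1
    rw [hudef]
    linarith
  have hmax0 : 0 ≤ max s 0 := le_max_right s 0
  have hmax1 : max s 0 ≤ 1 := max_le hs1.le zero_le_one
  have hkey := keyexp hu
  have hepos : (0:ℝ) < Real.exp 1 := Real.exp_pos 1
  have hinv : (0:ℝ) < (1 - r)⁻¹ := inv_pos.2 h1r
  have hGpos : 0 ≤ Real.exp (-u⁻¹) * (u ^ 2)⁻¹ := by positivity
  have habs : |etaDeriv r z| = Real.exp 1 * (Real.exp (-u⁻¹) * (u ^ 2)⁻¹) *
      (2 * max s 0 * (1 - r)⁻¹) := by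
    rw [etaDeriv, abs_neg, abs_of_nonneg (by positivity)]
  rw [habs]
  have h2 : Real.exp 1 * (Real.exp (-u⁻¹) * (u ^ 2)⁻¹) * (2 * max s 0 * (1 - r)⁻¹)
      ≤ Real.exp 1 * (4 * Real.exp (-2)) * (2 * (1 - r)⁻¹) := by
    have hb1 : 2 * max s 0 * (1 - r)⁻¹ ≤ 2 * (1 - r)⁻¹ := by
      nlinarith
    have hb0 : 0 ≤ 2 * max s 0 * (1 - r)⁻¹ := by positivity
    calc Real.exp 1 * (Real.exp (-u⁻¹) * (u ^ 2)⁻¹) * (2 * max s 0 * (1 - r)⁻¹)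
        ≤ Real.exp 1 * (Real.exp (-u⁻¹) * (u ^ 2)⁻¹) * (2 * (1 - r)⁻¹) :=
          mul_le_mul_of_nonneg_left hb1 (by positivity)
      _ ≤ Real.exp 1 * (4 * Real.exp (-2)) * (2 * (1 - r)⁻¹) :=
          mul_le_mul_of_nonneg_right (mul_le_mul_of_nonneg_left hkey hepos.le) (by positivity)
  refine h2.trans ?_
  have h3 : Real.exp 1 * Real.exp (-2) = Real.exp (-1) := by
    rw [← Real.exp_add]
    norm_num
  nlinarith [exp_neg_one_le, hinv, h3]

lemma etaDeriv_eq_zero {r : ℝ} (hr1 : r < 1) {z : ℂ} (h : ‖z‖ ≤ r) :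
    etaDeriv r z = 0 := by
  have h1 : 0 < 1 - r := by linarith
  have hs : (‖z‖ - r) / (1 - r) ≤ 0 := by
    rw [div_nonpos_iff]
    right
    constructor <;> linarith
  rw [etaDeriv, max_eq_right hs]
  ring

lemma etaHat_nonneg {r x : ℝ} (hr1 : r < 1) : 0 ≤ etaHat r x := by
  rw [etaHat_eq hr1]
  exact mul_nonneg (Real.exp_pos 1).le (expNegInvGlue.nonneg _)

lemma etaHat_le_one {r x : ℝ} (hr1 : r < 1) : etaHat r x ≤ 1 := by
  rw [etaHat_eq hr1]
  set u := 1 - mulMax ((x - r) / (1 - r)) with hudef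
  have hu1 : u ≤ 1 := by
    have := mulMax_nonneg ((x - r) / (1 - r))
    rw [hudef]; linarith
  rcases le_or_gt u 0 with h | h
  · rw [expNegInvGlue.zero_of_nonpos h, mul_zero]
    norm_num
  · rw [expNegInvGlue_of_pos h]
    rw [← Real.exp_add]
    have h1 : 1 ≤ u⁻¹ := one_le_inv_iff₀.2 ⟨h, hu1⟩
    rw [Real.exp_le_one_iff]
    linarith


lemma iota_eq (m : ℕ) (ε : ℝ) :
    iota m ε = fun w : ℂ => w ^ m + eta (1 - 4 * ε / (m : ℝ)) w • ((ε : ℂ) * w) := by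
  funext w
  rw [iota, Complex.real_smul]
  ring

lemma hasFDerivAt_iota (m : ℕ) (ε : ℝ) {z : ℂ} (hz : z ≠ 0)
    (hz1 : ‖z‖ < 1) (hr1 : 1 - 4 * ε / (m : ℝ) < 1) :
    HasFDerivAt (iota m ε)
      (((m : ℂ) * z ^ (m - 1)) • (1 : ℂ →L[ℝ] ℂ) +
        (eta (1 - 4 * ε / (m : ℝ)) z • ((ε : ℂ) • (1 : ℂ →L[ℝ] ℂ)) +
          (etaDeriv (1 - 4 * ε / (m : ℝ)) z • dabs z).smulRight ((ε : ℂ) * z))) z := by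
  have hEta := hasFDerivAt_eta hr1 hz hz1
  have hpow := (hasDerivAt_pow m z).complexToReal_fderiv
  have hlin : HasDerivAt (fun w : ℂ => (ε : ℂ) * w) ((ε : ℂ)) z := by
    simpa using (hasDerivAt_id z).const_mul (ε : ℂ)
  have hsmul := hEta.smul hlin.complexToReal_fderiv
  have := hpow.add hsmul
  rw [iota_eq m ε]
  exact this

lemma wirtinger_iota (m : ℕ) (ε : ℝ) {z : ℂ} (hz : z ≠ 0)
    (hz1 : ‖z‖ < 1) (hr1 : 1 - 4 * ε / (m : ℝ) < 1) :
    wirtingerDBar (iota m ε) z =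
      (ε : ℂ) * (etaDeriv (1 - 4 * ε / (m : ℝ)) z : ℝ) * ((‖z‖)⁻¹ : ℝ) * z ^ 2 / 2 ∧
    wirtingerD (iota m ε) z =
      (m : ℂ) * z ^ (m - 1) + (ε : ℂ) * (eta (1 - 4 * ε / (m : ℝ)) z : ℝ) +
        (ε : ℂ) * (etaDeriv (1 - 4 * ε / (m : ℝ)) z : ℝ) * ((‖z‖)⁻¹ : ℝ) *
          (Complex.normSq z : ℝ) / 2 := by
  have hT := (hasFDerivAt_iota m ε hz hz1 hr1).fderiv
  set a := etaDeriv (1 - 4 * ε / (m : ℝ)) z with ha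
  set η := eta (1 - 4 * ε / (m : ℝ)) z with hη
  have hT1 : fderiv ℝ (iota m ε) z 1 =
      (m : ℂ) * z ^ (m - 1) + (ε : ℂ) * (η : ℝ) +
        (ε : ℂ) * (a : ℝ) * ((‖z‖)⁻¹ : ℝ) * (z.re : ℝ) * z := by
    rw [hT]
    simp only [ContinuousLinearMap.add_apply, ContinuousLinearMap.smul_apply,
      ContinuousLinearMap.one_apply, ContinuousLinearMap.smulRight_apply, dabs_apply,
      Complex.one_re, Complex.one_im, smul_eq_mul, Complex.real_smul]
    push_cast
    ring
  have hTI : fderiv ℝ (iota m ε) z Complex.I =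
      ((m : ℂ) * z ^ (m - 1)) * Complex.I + (ε : ℂ) * (η : ℝ) * Complex.I +
        (ε : ℂ) * (a : ℝ) * ((‖z‖)⁻¹ : ℝ) * (z.im : ℝ) * z := by
    rw [hT]
    simp only [ContinuousLinearMap.add_apply, ContinuousLinearMap.smul_apply,
      ContinuousLinearMap.one_apply, ContinuousLinearMap.smulRight_apply, dabs_apply,
      Complex.I_re, Complex.I_im, smul_eq_mul, Complex.real_smul]
    push_cast
    ring
  have h1 : Complex.I ^ 2 = -1 := Complex.I_sq
  have h2 : (z.re : ℂ) + (z.im : ℂ) * Complex.I = z := Complex.re_add_im z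
  have h4 : ((Complex.normSq z : ℝ) : ℂ) = (z.re : ℂ) ^ 2 + (z.im : ℂ) ^ 2 := by
    rw [Complex.normSq_apply]
    push_cast
    ring
  constructor
  · rw [wirtingerDBar, hT1, hTI]
    linear_combination (((m : ℂ) * z ^ (m - 1) + (ε : ℂ) * (η : ℝ)) / 2) * h1 +
      ((ε : ℂ) * (a : ℝ) * ((‖z‖)⁻¹ : ℝ) * z / 2) * h2
  · rw [wirtingerD, hT1, hTI]
    linear_combination (-((m : ℂ) * z ^ (m - 1) + (ε : ℂ) * (η : ℝ)) / 2 -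
        ((ε : ℂ) * (a : ℝ) * ((‖z‖)⁻¹ : ℝ) / 2) * (z.im : ℂ) ^ 2) * h1 +
      (-((ε : ℂ) * (a : ℝ) * ((‖z‖)⁻¹ : ℝ) / 2) * ((z.re : ℂ) - Complex.I * (z.im : ℂ))) * h2 +
      (-((ε : ℂ) * (a : ℝ) * ((‖z‖)⁻¹ : ℝ) / 2)) * h4


lemma contDiffAt_cabs {z : ℂ} (hz : z ≠ 0) :
    ContDiffAt ℝ 1 (fun w : ℂ => ‖w‖) z := by
  have heq : (fun w : ℂ => ‖w‖) = fun w : ℂ => Real.sqrt (Complex.normSq w) := by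
    funext w
    exact Complex.norm_def w
  rw [heq]
  have hns : Complex.normSq z ≠ 0 := by simpa [Complex.normSq_eq_zero] using hz
  have h1 : ContDiff ℝ 1 (fun w : ℂ => Complex.normSq w) := by
    have h2 : (fun w : ℂ => Complex.normSq w) = fun w : ℂ => w.re * w.re + w.im * w.im := by
      funext w
      exact Complex.normSq_apply w
    rw [h2]
    exact (Complex.reCLM.contDiff.mul Complex.reCLM.contDiff).add
      (Complex.imCLM.contDiff.mul Complex.imCLM.contDiff)
  exact (Real.contDiffAt_sqrt hns).comp z h1.contDiffAt

lemma contDiffAt_eta {r : ℝ} (hr1 : r < 1) {z : ℂ} (hz : z ≠ 0) :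
    ContDiffAt ℝ 1 (eta r) z := by
  have heq : eta r = fun w : ℂ =>
      Real.exp 1 * expNegInvGlue (1 - mulMax ((‖w‖ - r) / (1 - r))) := by
    funext w
    exact etaHat_eq hr1 _
  rw [heq]
  have haff : ContDiff ℝ 1 (fun y : ℝ => (y - r) / (1 - r)) :=
    (contDiff_id.sub contDiff_const).div_const (1 - r)
  have hin : ContDiffAt ℝ 1 (fun w : ℂ => (‖w‖ - r) / (1 - r)) z :=
    haff.contDiffAt.comp z (contDiffAt_cabs hz)
  have hmm : ContDiffAt ℝ 1 (fun w : ℂ => mulMax ((‖w‖ - r) / (1 - r))) z :=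
    contDiff_mulMax.contDiffAt.comp z hin
  have hsub : ContDiffAt ℝ 1 (fun w : ℂ => 1 - mulMax ((‖w‖ - r) / (1 - r))) z :=
    contDiffAt_const.sub hmm
  have hexp : ContDiffAt ℝ 1
      (fun w : ℂ => expNegInvGlue (1 - mulMax ((‖w‖ - r) / (1 - r)))) z :=
    (expNegInvGlue.contDiff.contDiffAt).comp z hsub
  exact contDiffAt_const.mul hexp

set_option maxHeartbeats 1000000 in
/-- There exist `n₀ ∈ ℕ`, `δ₀ > 0` and `k < 1` such that for every
integer `m > n₀` and every real `0 < ε ≤ δ₀`: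
(i) `r_{m,ε} := 1 − 4ε/m > (ε/m)^(1/(m−1))`, and
(ii) `ι_{m,ε}` is `C¹` (as a real map) on the open unit disk and satisfies
`|∂̄ι_{m,ε}(z)| ≤ k·|∂ι_{m,ε}(z)|` there. -/
theorem interpolation_lemma :
    ∃ (n₀ : ℕ) (δ₀ k : ℝ), 0 < δ₀ ∧ k < 1 ∧
      ∀ m : ℕ, n₀ < m → ∀ ε : ℝ, 0 < ε → ε ≤ δ₀ →
        ((ε / (m : ℝ)) ^ ((1 : ℝ) / ((m : ℝ) - 1)) < 1 - 4 * ε / (m : ℝ)) ∧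
        ContDiffOn ℝ 1 (iota m ε) (Metric.ball (0 : ℂ) 1) ∧
        ∀ z ∈ Metric.ball (0 : ℂ) 1,
          ‖wirtingerDBar (iota m ε) z‖
            ≤ k * ‖wirtingerD (iota m ε) z‖ := by
  refine ⟨100, 1/100, 7/10, by norm_num, by norm_num, ?_⟩
  intro m hm ε hε0 hε
  have hm1 : (101:ℝ) ≤ (m:ℝ) := by exact_mod_cast hm
  have hm0 : (0:ℝ) < (m:ℝ) := by linarith
  have h4em : 0 < 4 * ε / (m:ℝ) := by positivity
  have hr1 : 1 - 4 * ε / (m:ℝ) < 1 := by linarith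
  have hfrac : 4 * ε / (m:ℝ) ≤ 1 / 10 := by
    rw [div_le_iff₀ hm0]
    nlinarith
  have hr0 : (0:ℝ) < 1 - 4 * ε / (m:ℝ) := by linarith
  have h1m : 1 ≤ m := by omega
  have hcast : ((m - 1 : ℕ) : ℝ) = (m : ℝ) - 1 := by
    rw [Nat.cast_sub h1m, Nat.cast_one]
  have hdmc : 4 * ε / (m:ℝ) * (m:ℝ) = 4 * ε := div_mul_cancel₀ _ hm0.ne'
  have hBer : 1 - 4 * ε ≤ (1 - 4 * ε / (m:ℝ)) ^ (m - 1) := by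
    have hb := one_add_mul_le_pow (a := -(4 * ε / (m:ℝ)))
      (by nlinarith : (-2:ℝ) ≤ -(4 * ε / (m:ℝ))) (m - 1)
    have h2 : (1 : ℝ) + ((m - 1 : ℕ):ℝ) * (-(4 * ε / (m:ℝ)))
        = 1 - ((m:ℝ) - 1) * (4 * ε / (m:ℝ)) := by rw [hcast]; ring
    have h3 : (1 + -(4 * ε / (m:ℝ)) : ℝ) = 1 - 4 * ε / (m:ℝ) := by ring
    rw [h2, h3] at hb
    have h5 : ((m:ℝ) - 1) * (4 * ε / (m:ℝ)) ≤ 4 * ε := by nlinarith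
    linarith
  constructor
  · -- part (i)
    have hεm0 : 0 < ε / (m:ℝ) := by positivity
    have hεm : ε / (m:ℝ) < 1 / 10000 := by
      rw [div_lt_iff₀ hm0]
      nlinarith
    have hkey : ε / (m:ℝ) < (1 - 4 * ε / (m:ℝ)) ^ (m - 1) := by nlinarith
    have hmr1 : (0:ℝ) < (m:ℝ) - 1 := by linarith
    have h7 := Real.rpow_lt_rpow hεm0.le hkey
      (by positivity : (0:ℝ) < 1 / ((m:ℝ) - 1))
    have h8 : (((1 - 4 * ε / (m:ℝ)) ^ (m - 1) : ℝ)) ^ ((1:ℝ) / ((m:ℝ) - 1))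
        = 1 - 4 * ε / (m:ℝ) := by
      rw [← Real.rpow_natCast (1 - 4 * ε / (m:ℝ)) (m - 1), ← Real.rpow_mul hr0.le, hcast]
      rw [mul_one_div, div_self hmr1.ne', Real.rpow_one]
    rw [h8] at h7
    exact h7
  constructor
  · -- C¹
    intro z hz
    have hz1 : ‖z‖ < 1 := by
      have := Metric.mem_ball.1 hz
      rwa [Complex.dist_eq, sub_zero] at this
    apply ContDiffAt.contDiffWithinAt
    by_cases hz0 : z = 0
    · subst hz0
      have hg : ContDiffAt ℝ 1 (fun w : ℂ => w ^ m + (ε:ℂ) * w) 0 := by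
        apply ContDiffAt.add
        · exact (((contDiff_id.pow m : ContDiff ℂ 1 fun w : ℂ => w ^ m)).restrict_scalars ℝ).contDiffAt
        · exact (contDiff_const.mul contDiff_id).contDiffAt
      refine hg.congr_of_eventuallyEq ?_
      filter_upwards [Metric.ball_mem_nhds (0:ℂ) hr0] with w hw
      have hwr : ‖w‖ ≤ 1 - 4 * ε / (m:ℝ) := by
        have : dist w 0 < 1 - 4 * ε / (m:ℝ) := hw
        rw [Complex.dist_eq, sub_zero] at this
        exact this.le
      rw [iota, show eta (1 - 4 * ε / (m:ℝ)) w = 1 from by rw [eta, etaHat, if_pos hwr]]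
      push_cast
      ring
    · rw [iota_eq m ε]
      apply ContDiffAt.add
      · exact (((contDiff_id.pow m : ContDiff ℂ 1 fun w : ℂ => w ^ m)).restrict_scalars ℝ).contDiffAt
      · exact (contDiffAt_eta hr1 hz0).smul (contDiff_const.mul contDiff_id).contDiffAt
  · -- the Beltrami bound
    intro z hz
    have hz1 : ‖z‖ < 1 := by
      have := Metric.mem_ball.1 hz
      rwa [Complex.dist_eq, sub_zero] at this
    by_cases hz0 : z = 0
    · subst hz0
      have hev : iota m ε =ᶠ[nhds (0:ℂ)] fun w : ℂ => w ^ m + (ε:ℂ) * w := by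
        filter_upwards [Metric.ball_mem_nhds (0:ℂ) hr0] with w hw
        have hwr : ‖w‖ ≤ 1 - 4 * ε / (m:ℝ) := by
          have : dist w 0 < 1 - 4 * ε / (m:ℝ) := hw
          rw [Complex.dist_eq, sub_zero] at this
          exact this.le
        rw [iota, show eta (1 - 4 * ε / (m:ℝ)) w = 1 from by rw [eta, etaHat, if_pos hwr]]
        push_cast
        ring
      have hg : HasFDerivAt (fun w : ℂ => w ^ m + (ε:ℂ) * w)
          (((m:ℂ) * 0 ^ (m - 1) + (ε:ℂ)) • (1 : ℂ →L[ℝ] ℂ)) 0 := by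
        have h1 := (hasDerivAt_pow m (0:ℂ)).add
          (by simpa using (hasDerivAt_id (0:ℂ)).const_mul (ε:ℂ))
        exact h1.complexToReal_fderiv
      have hfd : fderiv ℝ (iota m ε) 0 = ((m:ℂ) * 0 ^ (m - 1) + (ε:ℂ)) • (1 : ℂ →L[ℝ] ℂ) := by
        rw [hev.fderiv_eq, hg.fderiv]
      have hbar0 : wirtingerDBar (iota m ε) 0 = 0 := by
        rw [wirtingerDBar, hfd]
        simp only [ContinuousLinearMap.smul_apply, ContinuousLinearMap.one_apply,
          smul_eq_mul]
        linear_combination (((m:ℂ) * 0 ^ (m - 1) + (ε:ℂ)) / 2) * Complex.I_sq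
      rw [hbar0]
      simp only [norm_zero]
      positivity
    · obtain ⟨hbar, hd⟩ := wirtinger_iota m ε hz0 hz1 hr1
      set x₀ := ‖z‖ with hx₀def
      set a := etaDeriv (1 - 4 * ε / (m:ℝ)) z with hadef
      set η := eta (1 - 4 * ε / (m:ℝ)) z with hηdef
      have hx0 : 0 < x₀ := norm_pos_iff.2 hz0
      have hN : Complex.normSq z = x₀ ^ 2 := (Complex.sq_norm z).symm
      have e1 : ‖wirtingerDBar (iota m ε) z‖ = ε * |a| * x₀ / 2 := by
        rw [hbar]
        rw [norm_div, norm_mul, norm_mul, norm_mul, norm_pow]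
        simp only [Complex.norm_real, Real.norm_eq_abs, ← hx₀def]
        rw [abs_of_pos hε0, abs_of_nonneg (inv_pos.2 hx0).le]
        rw [show ‖(2:ℂ)‖ = 2 from by norm_num]
        field_simp
      have hη0 : 0 ≤ η := etaHat_nonneg hr1
      have hη1 : η ≤ 1 := etaHat_le_one hr1
      have e2 : wirtingerD (iota m ε) z = (m:ℂ) * z ^ (m - 1) +
          ((ε * η + ε * a * x₀⁻¹ * Complex.normSq z / 2 : ℝ) : ℂ) := by
        rw [hd]
        push_cast
        ring
      have hwb : |ε * η + ε * a * x₀⁻¹ * Complex.normSq z / 2| ≤ ε + ε * |a| * x₀ / 2 := by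
        have h1 : |ε * η + ε * a * x₀⁻¹ * Complex.normSq z / 2|
            ≤ |ε * η| + |ε * a * x₀⁻¹ * Complex.normSq z / 2| := abs_add_le _ _
        have h2 : |ε * η| ≤ ε := by
          rw [abs_mul, abs_of_pos hε0, abs_of_nonneg hη0]
          nlinarith
        have h3 : |ε * a * x₀⁻¹ * Complex.normSq z / 2| = ε * |a| * x₀ / 2 := by
          rw [hN, abs_div, abs_mul, abs_mul, abs_mul, abs_of_pos hε0,
            abs_of_nonneg (inv_pos.2 hx0).le, abs_of_nonneg (by positivity : (0:ℝ) ≤ x₀ ^ 2)]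
          rw [show |(2:ℝ)| = 2 from by norm_num]
          field_simp
        linarith
      have hW : (m:ℝ) * x₀ ^ (m - 1) - (ε + ε * |a| * x₀ / 2)
          ≤ ‖wirtingerD (iota m ε) z‖ := by
        rw [e2]
        have h9 : ‖(m:ℂ) * z ^ (m - 1)‖ = (m:ℝ) * x₀ ^ (m - 1) := by
          rw [norm_mul, norm_pow, Complex.norm_natCast, hx₀def]
        have h10 := norm_add_le ((m:ℂ) * z ^ (m - 1) +
          ((ε * η + ε * a * x₀⁻¹ * Complex.normSq z / 2 : ℝ) : ℂ))
          (-((ε * η + ε * a * x₀⁻¹ * Complex.normSq z / 2 : ℝ) : ℂ))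
        simp only [add_neg_cancel_right] at h10
        have h11 : ‖-((ε * η + ε * a * x₀⁻¹ * Complex.normSq z / 2 : ℝ) : ℂ)‖
            = |ε * η + ε * a * x₀⁻¹ * Complex.normSq z / 2| := by
          rw [show -((ε * η + ε * a * x₀⁻¹ * Complex.normSq z / 2 : ℝ) : ℂ)
              = ((-(ε * η + ε * a * x₀⁻¹ * Complex.normSq z / 2) : ℝ) : ℂ) from by push_cast; ring,
            Complex.norm_real, Real.norm_eq_abs, abs_neg]
        rw [h9, h11] at h10
        linarith
      by_cases hxr : x₀ ≤ 1 - 4 * ε / (m:ℝ)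
      · have ha0 : a = 0 := etaDeriv_eq_zero hr1 hxr
        rw [e1, ha0]
        simp only [abs_zero, mul_zero, zero_mul, zero_div]
        positivity
      · push_neg at hxr
        have hpowlb : (1 - 4 * ε / (m:ℝ)) ^ (m - 1) ≤ x₀ ^ (m - 1) :=
          pow_le_pow_left₀ hr0.le hxr.le (m - 1)
        have hDa : |a| ≤ 3 * (1 - (1 - 4 * ε / (m:ℝ)))⁻¹ := etaDeriv_abs_le hr1 hz1
        have hinv2 : (1 - (1 - 4 * ε / (m:ℝ)))⁻¹ = (m:ℝ) / (4 * ε) := by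
          rw [show 1 - (1 - 4 * ε / (m:ℝ)) = 4 * ε / (m:ℝ) from by ring, inv_div]
        rw [hinv2] at hDa
        have hx₀1 : x₀ ≤ 1 := hz1.le
        have hD : ε * |a| * x₀ / 2 ≤ 3 * (m:ℝ) / 8 := by
          have ha0' : 0 ≤ |a| := abs_nonneg a
          have hstep : ε * |a| * x₀ ≤ ε * (3 * ((m:ℝ) / (4 * ε))) * 1 := by
            have hh1 : ε * |a| ≤ ε * (3 * ((m:ℝ) / (4 * ε))) :=
              mul_le_mul_of_nonneg_left hDa hε0.le
            have hh2 : 0 ≤ ε * (3 * ((m:ℝ) / (4 * ε))) := by positivity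
            exact mul_le_mul hh1 hx₀1 hx0.le hh2
          have heq3 : ε * (3 * ((m:ℝ) / (4 * ε))) * 1 = 3 * (m:ℝ) / 4 := by
            field_simp
          rw [heq3] at hstep
          linarith
        have hP : (m:ℝ) - 4 * (ε * (m:ℝ)) ≤ (m:ℝ) * x₀ ^ (m - 1) := by
          have hh := mul_le_mul_of_nonneg_left (hBer.trans hpowlb) hm0.le
          have hexp : (m:ℝ) * (1 - 4 * ε) = (m:ℝ) - 4 * (ε * (m:ℝ)) := by ring
          linarith
        have hεm2 : ε * (m:ℝ) ≤ (m:ℝ) / 100 := by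
          have := mul_le_mul_of_nonneg_right hε hm0.le
          linarith
        rw [e1]
        have hWD := hW
        linarith
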